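/- Let X be a finite set, π : X → V with π(x) ≠ 0, and suppose π = π1 + π2 pointwise with ⟪π1(x), π2(y)⟫ = 0 for all x, y ∈ X, and ‖π1(x)‖ = c1‖π(x)‖, ‖π2(x)‖ = c2‖π(x)‖ with c1, c2 > 0 for all x. Then for any labeling σ with N = Σ|σ| > 0: L(σ, π) = c1²·L(σ, π1) + c2²·L(σ, π2), where L(σ, ρ) = (Σ σ(x,y)⟪ρ(x),ρ(y)⟫/(‖ρ(x)‖‖ρ(y)‖))/N. -/

import Mathlib

/-!
The cosine similarity of `π x` and `π y` splits as `⟪π₁ x, π₁ y⟫ / (‖π x‖ ‖π y‖) + ⟪π₂ x, π₂ y⟫ / (‖π x‖ ‖π y‖)`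
because the cross terms vanish, and `‖πᵢ x‖ ‖πᵢ y‖ = cᵢ² ‖π x‖ ‖π y‖` turns each summand into `cᵢ²` times the
cosine similarity of the components. Averaging against the labeling `σ` is linear, so the identity passes to
the loss.
-/

open RealInnerProductSpace

section

variable {V : Type*} [NormedAddCommGroup V] [InnerProductSpace ℝ V]

theorem real_inner_add_add_of_inner_eq_zero {u₁ u₂ v₁ v₂ : V}
    (h₁₂ : ⟪u₁, v₂⟫ = 0) (h₂₁ : ⟪v₁, u₂⟫ = 0) :
    ⟪u₁ + u₂, v₁ + v₂⟫ = ⟪u₁, v₁⟫ + ⟪u₂, v₂⟫ := by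
  rw [inner_add_left, inner_add_right, inner_add_right, h₁₂, real_inner_comm v₁ u₂, h₂₁]
  ring

theorem sq_mul_inner_div_norm_mul_norm_of_norm_eq_mul {u v : V} {c a b : ℝ}
    (hu : ‖u‖ = c * a) (hv : ‖v‖ = c * b) :
    c ^ 2 * (⟪u, v⟫ / (‖u‖ * ‖v‖)) = ⟪u, v⟫ / (a * b) := by
  rcases eq_or_ne c 0 with rfl | hc
  · have hu0 : u = 0 := norm_eq_zero.mp (by simpa using hu)
    simp [hu0]
  · rw [hu, hv, mul_mul_mul_comm, ← sq, ← mul_div_assoc, mul_div_mul_left _ _ (pow_ne_zero 2 hc)]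

end

section

variable {X V : Type*} [Fintype X] [NormedAddCommGroup V] [InnerProductSpace ℝ V]

noncomputable def similarityLoss (σ : X × X → ℝ) (ρ : X → V) : ℝ :=
  (∑ p : X × X, σ p * (⟪ρ p.1, ρ p.2⟫ / (‖ρ p.1‖ * ‖ρ p.2‖))) / ∑ p : X × X, |σ p|

theorem similarityLoss_eq_of_orthogonal_decomposition {π π₁ π₂ : X → V} {c₁ c₂ : ℝ}
    (hdec : ∀ x, π x = π₁ x + π₂ x) (horth : ∀ x y, ⟪π₁ x, π₂ y⟫ = 0)
    (hn₁ : ∀ x, ‖π₁ x‖ = c₁ * ‖π x‖) (hn₂ : ∀ x, ‖π₂ x‖ = c₂ * ‖π x‖) (σ : X × X → ℝ) :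
    similarityLoss σ π = c₁ ^ 2 * similarityLoss σ π₁ + c₂ ^ 2 * similarityLoss σ π₂ := by
  have hpair : ∀ x y : X, ⟪π x, π y⟫ / (‖π x‖ * ‖π y‖) =
      c₁ ^ 2 * (⟪π₁ x, π₁ y⟫ / (‖π₁ x‖ * ‖π₁ y‖)) +
        c₂ ^ 2 * (⟪π₂ x, π₂ y⟫ / (‖π₂ x‖ * ‖π₂ y‖)) := by
    intro x y
    rw [sq_mul_inner_div_norm_mul_norm_of_norm_eq_mul (hn₁ x) (hn₁ y),
      sq_mul_inner_div_norm_mul_norm_of_norm_eq_mul (hn₂ x) (hn₂ y), ← add_div, hdec x, hdec y,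
      real_inner_add_add_of_inner_eq_zero (horth x y) (horth y x), ← hdec x, ← hdec y]
  unfold similarityLoss
  rw [mul_div_assoc', mul_div_assoc', ← add_div, Finset.mul_sum, Finset.mul_sum,
    ← Finset.sum_add_distrib]
  congr 1
  refine Finset.sum_congr rfl fun p _ => ?_
  rw [hpair]
  ring

end

theorem stmt_11_general {X : Type*} [Fintype X]
    {V : Type*} [NormedAddCommGroup V] [InnerProductSpace ℝ V]
    (π π1 π2 : X → V) (c1 c2 : ℝ)
    (hdec : ∀ x, π x = π1 x + π2 x)
    (horth : ∀ x y, ⟪π1 x, π2 y⟫ = 0)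
    (hn1 : ∀ x, ‖π1 x‖ = c1 * ‖π x‖) (hn2 : ∀ x, ‖π2 x‖ = c2 * ‖π x‖)
    (σ : X × X → ℝ) :
    (∑ p : X × X, σ p * (⟪π p.1, π p.2⟫ / (‖π p.1‖ * ‖π p.2‖))) /
        (∑ p : X × X, |σ p|) =
    c1 ^ 2 * ((∑ p : X × X, σ p * (⟪π1 p.1, π1 p.2⟫ / (‖π1 p.1‖ * ‖π1 p.2‖))) /
        (∑ p : X × X, |σ p|)) +
    c2 ^ 2 * ((∑ p : X × X, σ p * (⟪π2 p.1, π2 p.2⟫ / (‖π2 p.1‖ * ‖π2 p.2‖))) /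
        (∑ p : X × X, |σ p|)) :=
  similarityLoss_eq_of_orthogonal_decomposition hdec horth hn1 hn2 σ

theorem stmt_11 {X : Type*} [Fintype X] [Nonempty X]
    {V : Type*} [NormedAddCommGroup V] [InnerProductSpace ℝ V]
    (π π1 π2 : X → V) (c1 c2 : ℝ) (hc1 : 0 < c1) (hc2 : 0 < c2)
    (hπ : ∀ x, π x ≠ 0)
    (hdec : ∀ x, π x = π1 x + π2 x)
    (horth : ∀ x y, ⟪π1 x, π2 y⟫ = 0)
    (hn1 : ∀ x, ‖π1 x‖ = c1 * ‖π x‖) (hn2 : ∀ x, ‖π2 x‖ = c2 * ‖π x‖)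
    (σ : X × X → ℝ) (hN : 0 < ∑ p : X × X, |σ p|) :
    (∑ p : X × X, σ p * (⟪π p.1, π p.2⟫ / (‖π p.1‖ * ‖π p.2‖))) /
        (∑ p : X × X, |σ p|) =
    c1 ^ 2 * ((∑ p : X × X, σ p * (⟪π1 p.1, π1 p.2⟫ / (‖π1 p.1‖ * ‖π1 p.2‖))) /
        (∑ p : X × X, |σ p|)) +
    c2 ^ 2 * ((∑ p : X × X, σ p * (⟪π2 p.1, π2 p.2⟫ / (‖π2 p.1‖ * ‖π2 p.2‖))) /
        (∑ p : X × X, |σ p|)) :=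
  stmt_11_general π π1 π2 c1 c2 hdec horth hn1 hn2 σ
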